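/- arXiv:1003.3259 — 7 statements merged into one kernel-verified Lean document; each statement's English description precedes it below -/
import Mathlib

section
/- Partial inversion is an involution: if F is a square matrix partitioned by disjoint index sets a and b with F_{aa} invertible and with the Schur complement structure making all required blocks invertible, then inv_a (inv_a F) = F. -/
open Matrix

/-- Partial inversion on the first block of a 2×2 block matrix. -/
noncomputable def pinvBlocks {α β : Type*} [Fintype α] [Fintype β] [DecidableEq α] [DecidableEq β]
    (M : Matrix (α ⊕ β) (α ⊕ β) ℝ) : Matrix (α ⊕ β) (α ⊕ β) ℝ :=
  Matrix.fromBlocks (M.toBlocks₁₁)⁻¹ (-((M.toBlocks₁₁)⁻¹ * M.toBlocks₁₂))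
    (M.toBlocks₂₁ * (M.toBlocks₁₁)⁻¹)
    (M.toBlocks₂₂ - M.toBlocks₂₁ * (M.toBlocks₁₁)⁻¹ * M.toBlocks₁₂)

/-- Partial inversion is an involution: `inv_a (inv_a F) = F`. -/
theorem partial_inversion_involution
    {α β : Type*} [Fintype α] [Fintype β] [DecidableEq α] [DecidableEq β]
    (F : Matrix (α ⊕ β) (α ⊕ β) ℝ)
    (haa : IsUnit (F.toBlocks₁₁).det)
    (hschur : IsUnit (F.toBlocks₂₂ - F.toBlocks₂₁ * (F.toBlocks₁₁)⁻¹ * F.toBlocks₁₂).det) :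
    pinvBlocks (pinvBlocks F) = F := by
  have h1 : (F.toBlocks₁₁)⁻¹⁻¹ = F.toBlocks₁₁ := Matrix.nonsing_inv_nonsing_inv _ haa
  unfold pinvBlocks
  simp only [toBlocks_fromBlocks₁₁, toBlocks_fromBlocks₁₂, toBlocks_fromBlocks₂₁,
    toBlocks_fromBlocks₂₂, h1]
  rw [Matrix.mul_neg, ← Matrix.mul_assoc, Matrix.mul_nonsing_inv _ haa, Matrix.one_mul,
    neg_neg, Matrix.mul_assoc _ _ (F.toBlocks₁₁), Matrix.nonsing_inv_mul _ haa,
    Matrix.mul_one, Matrix.mul_neg, sub_neg_eq_add, ← Matrix.mul_assoc,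
    sub_add_cancel, ← Matrix.fromBlocks_toBlocks F]
  simp [Matrix.fromBlocks_toBlocks]
end

section
/- Full inversion decomposes into two steps of partial inversion: if F is an invertible square matrix partitioned by disjoint sets a and b, with F_{aa} invertible and the Schur complement F_{bb.a} = F_{bb} − F_{ba}(F_{aa})⁻¹F_{ab} invertible, then applying partial inversion on a followed by partial inversion on b (with appropriate sign conventions as in the definition) yields F⁻¹ up to the stated sign pattern; in particular inv_b (inv_a F) has the same (a,a) block as F⁻¹, namely ((inv_b inv_a F))_{aa} = (F⁻¹)_{aa}. -/
open Matrix

/-- Partial inversion on the second block of a 2×2 block matrix. -/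
noncomputable def pinvBlocks₂ {α β : Type*} [Fintype α] [Fintype β] [DecidableEq α] [DecidableEq β]
    (M : Matrix (α ⊕ β) (α ⊕ β) ℝ) : Matrix (α ⊕ β) (α ⊕ β) ℝ :=
  Matrix.fromBlocks (M.toBlocks₁₁ - M.toBlocks₁₂ * (M.toBlocks₂₂)⁻¹ * M.toBlocks₂₁)
    (M.toBlocks₁₂ * (M.toBlocks₂₂)⁻¹)
    (-((M.toBlocks₂₂)⁻¹ * M.toBlocks₂₁)) (M.toBlocks₂₂)⁻¹

/-- Full inversion decomposes into two steps of partial inversion: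
the (a,a)-block of `inv_b (inv_a F)` equals the (a,a)-block of `F⁻¹`. -/
theorem partial_inversion_decomposes_full_inversion
    {α β : Type*} [Fintype α] [Fintype β] [DecidableEq α] [DecidableEq β]
    (F : Matrix (α ⊕ β) (α ⊕ β) ℝ)
    (hF : IsUnit F.det)
    (haa : IsUnit (F.toBlocks₁₁).det)
    (hschur : IsUnit (F.toBlocks₂₂ - F.toBlocks₂₁ * (F.toBlocks₁₁)⁻¹ * F.toBlocks₁₂).det) :
    (pinvBlocks₂ (pinvBlocks F)).toBlocks₁₁ = (F⁻¹).toBlocks₁₁ := by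
  letI : Invertible F.toBlocks₁₁ := F.toBlocks₁₁.invertibleOfIsUnitDet haa
  letI : Invertible (F.toBlocks₂₂ - F.toBlocks₂₁ * (F.toBlocks₁₁)⁻¹ * F.toBlocks₁₂) :=
    Matrix.invertibleOfIsUnitDet _ hschur
  letI : Invertible (F.toBlocks₂₂ - F.toBlocks₂₁ * ⅟(F.toBlocks₁₁) * F.toBlocks₁₂) := by
    rw [invOf_eq_nonsing_inv]; infer_instance
  letI : Invertible F := F.invertibleOfIsUnitDet hF
  letI : Invertible (Matrix.fromBlocks F.toBlocks₁₁ F.toBlocks₁₂ F.toBlocks₂₁ F.toBlocks₂₂) :=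
    (Matrix.fromBlocks_toBlocks F) ▸ ‹Invertible F›
  have hinv : F⁻¹ = Matrix.fromBlocks
      (⅟F.toBlocks₁₁ + ⅟F.toBlocks₁₁ * F.toBlocks₁₂ *
        ⅟(F.toBlocks₂₂ - F.toBlocks₂₁ * ⅟F.toBlocks₁₁ * F.toBlocks₁₂) * F.toBlocks₂₁ *
        ⅟F.toBlocks₁₁)
      (-(⅟F.toBlocks₁₁ * F.toBlocks₁₂ *
        ⅟(F.toBlocks₂₂ - F.toBlocks₂₁ * ⅟F.toBlocks₁₁ * F.toBlocks₁₂)))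
      (-(⅟(F.toBlocks₂₂ - F.toBlocks₂₁ * ⅟F.toBlocks₁₁ * F.toBlocks₁₂) * F.toBlocks₂₁ *
        ⅟F.toBlocks₁₁))
      (⅟(F.toBlocks₂₂ - F.toBlocks₂₁ * ⅟F.toBlocks₁₁ * F.toBlocks₁₂)) := by
    conv_lhs => rw [← Matrix.fromBlocks_toBlocks F]
    rw [← invOf_eq_nonsing_inv]
    exact Matrix.invOf_fromBlocks₁₁_eq _ _ _ _
  rw [hinv]
  simp only [pinvBlocks, pinvBlocks₂, Matrix.toBlocks_fromBlocks₁₁, Matrix.toBlocks_fromBlocks₁₂,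
    Matrix.toBlocks_fromBlocks₂₁, Matrix.toBlocks_fromBlocks₂₂, invOf_eq_nonsing_inv,
    Matrix.neg_mul, sub_neg_eq_add, Matrix.mul_assoc]
end

section
/- Partial inversion composes via symmetric difference: for a square matrix F with all principal submatrices invertible and disjoint index sets a, b, c, one has inv_{a∪b} inv_{b∪c} F = inv_{a∪c} F. -/
open Matrix

/-- Partial inversion of a matrix on the index set `{i | p i}`. -/
noncomputable def pinv {n : Type*} [Fintype n] [DecidableEq n]
    (p : n → Prop) [DecidablePred p] (F : Matrix n n ℝ) : Matrix n n ℝ :=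
  (pinvBlocks (F.submatrix (Equiv.sumCompl p) (Equiv.sumCompl p))).submatrix
    (Equiv.sumCompl p).symm (Equiv.sumCompl p).symm

section Aux

set_option linter.unusedSectionVars false

variable {n : Type*} [Fintype n] [DecidableEq n]

/-- Swap on coordinates in `p`. -/
def sw (p : n → Prop) [DecidablePred p] (x y : n → ℝ) : n → ℝ :=
  fun i => if p i then y i else x i

lemma aux_blocks₁₁ (p : n → Prop) [DecidablePred p] (F : Matrix n n ℝ) :
    (F.submatrix (Equiv.sumCompl p) (Equiv.sumCompl p)).toBlocks₁₁
      = F.submatrix (Subtype.val : {i // p i} → n) Subtype.val := by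
  ext i j
  simp [toBlocks₁₁, Equiv.sumCompl_apply_inl]

lemma sw_comp (p : n → Prop) [DecidablePred p] (x y : n → ℝ) :
    (sw p x y) ∘ (Equiv.sumCompl p) = Sum.elim (fun i : {i // p i} => y i.val)
      (fun j : {j // ¬ p j} => x j.val) := by
  funext z
  cases z with
  | inl i => simp [sw, Equiv.sumCompl_apply_inl, i.2]
  | inr j => simp [sw, Equiv.sumCompl_apply_inr, j.2]

lemma comp_sumCompl_eq (p : n → Prop) [DecidablePred p] (x : n → ℝ) :
    x ∘ (Equiv.sumCompl p) = Sum.elim (fun i : {i // p i} => x i.val)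
      (fun j : {j // ¬ p j} => x j.val) := by
  funext z
  cases z with
  | inl i => simp [Equiv.sumCompl_apply_inl]
  | inr j => simp [Equiv.sumCompl_apply_inr]

/-- Blockwise description of `F *ᵥ x` via the `sumCompl` equivalence. -/
lemma mulVec_comp_sumCompl (p : n → Prop) [DecidablePred p] (F : Matrix n n ℝ) (x : n → ℝ) :
    (F.mulVec x) ∘ (Equiv.sumCompl p) =
      Sum.elim
        ((F.submatrix (Equiv.sumCompl p) (Equiv.sumCompl p)).toBlocks₁₁.mulVec
            (fun i : {i // p i} => x i.val)
          + (F.submatrix (Equiv.sumCompl p) (Equiv.sumCompl p)).toBlocks₁₂.mulVec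
            (fun j : {j // ¬ p j} => x j.val))
        ((F.submatrix (Equiv.sumCompl p) (Equiv.sumCompl p)).toBlocks₂₁.mulVec
            (fun i : {i // p i} => x i.val)
          + (F.submatrix (Equiv.sumCompl p) (Equiv.sumCompl p)).toBlocks₂₂.mulVec
            (fun j : {j // ¬ p j} => x j.val)) := by
  have h1 : (F.submatrix (Equiv.sumCompl p) (Equiv.sumCompl p)).mulVec
      (x ∘ (Equiv.sumCompl p)) = (F.mulVec x) ∘ (Equiv.sumCompl p) := by
    rw [submatrix_mulVec_equiv]
    have hxx : (x ∘ ⇑(Equiv.sumCompl p)) ∘ ⇑(Equiv.sumCompl p).symm = x := by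
      funext i; simp
    rw [hxx]
  rw [← h1]
  conv_lhs => rw [← fromBlocks_toBlocks (F.submatrix (Equiv.sumCompl p) (Equiv.sumCompl p)),
    comp_sumCompl_eq p x, fromBlocks_mulVec]
  simp

lemma pinvBlocks_mulVec {α β : Type*} [Fintype α] [Fintype β] [DecidableEq α] [DecidableEq β]
    (M : Matrix (α ⊕ β) (α ⊕ β) ℝ) (h : IsUnit M.toBlocks₁₁.det)
    (x₁ : α → ℝ) (x₂ : β → ℝ) :
    (pinvBlocks M).mulVec (Sum.elim ((M.toBlocks₁₁).mulVec x₁ + (M.toBlocks₁₂).mulVec x₂) x₂)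
      = Sum.elim x₁ ((M.toBlocks₂₁).mulVec x₁ + (M.toBlocks₂₂).mulVec x₂) := by
  have hinv : (M.toBlocks₁₁)⁻¹ * M.toBlocks₁₁ = 1 := nonsing_inv_mul _ h
  have h1 : (M.toBlocks₁₁)⁻¹ *ᵥ ((M.toBlocks₁₁) *ᵥ x₁ + (M.toBlocks₁₂) *ᵥ x₂)
      + (-((M.toBlocks₁₁)⁻¹ * M.toBlocks₁₂)) *ᵥ x₂ = x₁ := by
    rw [mulVec_add, mulVec_mulVec, mulVec_mulVec, hinv, one_mulVec, neg_mulVec]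
    abel
  have h2 : (M.toBlocks₂₁ * (M.toBlocks₁₁)⁻¹) *ᵥ ((M.toBlocks₁₁) *ᵥ x₁ + (M.toBlocks₁₂) *ᵥ x₂)
      + (M.toBlocks₂₂ - M.toBlocks₂₁ * (M.toBlocks₁₁)⁻¹ * M.toBlocks₁₂) *ᵥ x₂
      = (M.toBlocks₂₁) *ᵥ x₁ + (M.toBlocks₂₂) *ᵥ x₂ := by
    rw [mulVec_add, mulVec_mulVec, mulVec_mulVec, sub_mulVec,
      show M.toBlocks₂₁ * (M.toBlocks₁₁)⁻¹ * M.toBlocks₁₁ = M.toBlocks₂₁ by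
        rw [Matrix.mul_assoc, hinv, Matrix.mul_one]]
    abel
  rw [pinvBlocks, fromBlocks_mulVec]
  simp only [Sum.elim_comp_inl, Sum.elim_comp_inr]
  rw [h1, h2]

/-- The graph property of partial inversion. -/
lemma pinv_mulVec (p : n → Prop) [DecidablePred p] (F : Matrix n n ℝ)
    (h : IsUnit (F.submatrix (Subtype.val : {i // p i} → n) Subtype.val).det)
    (x : n → ℝ) :
    (pinv p F).mulVec (sw p x (F.mulVec x)) = sw p (F.mulVec x) x := by
  have hdet : IsUnit (F.submatrix (Equiv.sumCompl p) (Equiv.sumCompl p)).toBlocks₁₁.det := by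
    rw [aux_blocks₁₁]; exact h
  have key := pinvBlocks_mulVec _ hdet (fun i : {i // p i} => x i.val)
    (fun j : {j // ¬ p j} => x j.val)
  have hcomp := mulVec_comp_sumCompl p F x
  have hFst : (fun i : {i // p i} => (F.mulVec x) i.val)
      = (F.submatrix (Equiv.sumCompl p) (Equiv.sumCompl p)).toBlocks₁₁.mulVec
          (fun i : {i // p i} => x i.val)
        + (F.submatrix (Equiv.sumCompl p) (Equiv.sumCompl p)).toBlocks₁₂.mulVec
          (fun j : {j // ¬ p j} => x j.val) := by
    funext i
    have h' := congrFun hcomp (Sum.inl i)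
    simpa [Equiv.sumCompl_apply_inl] using h'
  have hSnd : (fun j : {j // ¬ p j} => (F.mulVec x) j.val)
      = (F.submatrix (Equiv.sumCompl p) (Equiv.sumCompl p)).toBlocks₂₁.mulVec
          (fun i : {i // p i} => x i.val)
        + (F.submatrix (Equiv.sumCompl p) (Equiv.sumCompl p)).toBlocks₂₂.mulVec
          (fun j : {j // ¬ p j} => x j.val) := by
    funext j
    have h' := congrFun hcomp (Sum.inr j)
    simpa [Equiv.sumCompl_apply_inr] using h'
  have hswx : sw p x (F.mulVec x) ∘ (Equiv.sumCompl p)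
      = Sum.elim
        ((F.submatrix (Equiv.sumCompl p) (Equiv.sumCompl p)).toBlocks₁₁.mulVec
            (fun i : {i // p i} => x i.val)
          + (F.submatrix (Equiv.sumCompl p) (Equiv.sumCompl p)).toBlocks₁₂.mulVec
            (fun j : {j // ¬ p j} => x j.val))
        (fun j : {j // ¬ p j} => x j.val) := by
    rw [sw_comp, hFst]
  have hswy : sw p (F.mulVec x) x ∘ (Equiv.sumCompl p)
      = Sum.elim (fun i : {i // p i} => x i.val)
        ((F.submatrix (Equiv.sumCompl p) (Equiv.sumCompl p)).toBlocks₂₁.mulVec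
            (fun i : {i // p i} => x i.val)
          + (F.submatrix (Equiv.sumCompl p) (Equiv.sumCompl p)).toBlocks₂₂.mulVec
            (fun j : {j // ¬ p j} => x j.val)) := by
    rw [sw_comp, hSnd]
  rw [pinv, submatrix_mulVec_equiv]
  simp only [Equiv.symm_symm]
  rw [hswx, key, ← hswy]
  funext i
  simp

/-- The matrix representing `x ↦ sw p x (F.mulVec x)`. -/
noncomputable def swMat (p : n → Prop) [DecidablePred p] (F : Matrix n n ℝ) : Matrix n n ℝ :=
  ((Matrix.fromBlocks ((F.submatrix (Equiv.sumCompl p) (Equiv.sumCompl p)).toBlocks₁₁)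
      ((F.submatrix (Equiv.sumCompl p) (Equiv.sumCompl p)).toBlocks₁₂) 0 1).submatrix
    (Equiv.sumCompl p).symm (Equiv.sumCompl p).symm)

lemma swMat_mulVec (p : n → Prop) [DecidablePred p] (F : Matrix n n ℝ) (x : n → ℝ) :
    (swMat p F).mulVec x = sw p x (F.mulVec x) := by
  have hcomp := mulVec_comp_sumCompl p F x
  have hFst : (fun i : {i // p i} => (F.mulVec x) i.val)
      = (F.submatrix (Equiv.sumCompl p) (Equiv.sumCompl p)).toBlocks₁₁.mulVec
          (fun i : {i // p i} => x i.val)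
        + (F.submatrix (Equiv.sumCompl p) (Equiv.sumCompl p)).toBlocks₁₂.mulVec
          (fun j : {j // ¬ p j} => x j.val) := by
    funext i
    have h' := congrFun hcomp (Sum.inl i)
    simpa [Equiv.sumCompl_apply_inl] using h'
  have hsw : sw p x (F.mulVec x) ∘ (Equiv.sumCompl p)
      = Sum.elim
        ((F.submatrix (Equiv.sumCompl p) (Equiv.sumCompl p)).toBlocks₁₁.mulVec
            (fun i : {i // p i} => x i.val)
          + (F.submatrix (Equiv.sumCompl p) (Equiv.sumCompl p)).toBlocks₁₂.mulVec
            (fun j : {j // ¬ p j} => x j.val))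
        (fun j : {j // ¬ p j} => x j.val) := by
    rw [sw_comp, hFst]
  rw [swMat, submatrix_mulVec_equiv]
  simp only [Equiv.symm_symm]
  rw [comp_sumCompl_eq p x, fromBlocks_mulVec]
  simp only [Sum.elim_comp_inl, Sum.elim_comp_inr, zero_mulVec, one_mulVec, zero_add]
  rw [← hsw]
  funext i
  simp

lemma swMat_isUnit_iff (p : n → Prop) [DecidablePred p] (F : Matrix n n ℝ) :
    IsUnit (swMat p F).det
      ↔ IsUnit (F.submatrix (Subtype.val : {i // p i} → n) Subtype.val).det := by
  rw [swMat, det_submatrix_equiv_self, det_fromBlocks_zero₂₁, det_one, mul_one, aux_blocks₁₁]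

lemma sw_surjective (p : n → Prop) [DecidablePred p] (F : Matrix n n ℝ)
    (h : IsUnit (F.submatrix (Subtype.val : {i // p i} → n) Subtype.val).det)
    (z : n → ℝ) : ∃ x, sw p x (F.mulVec x) = z := by
  have hs : Function.Surjective (swMat p F).mulVec :=
    mulVec_surjective_iff_isUnit.mpr ((isUnit_iff_isUnit_det _).mpr
      ((swMat_isUnit_iff p F).mpr h))
  obtain ⟨x, hx⟩ := hs z
  exact ⟨x, by rw [← swMat_mulVec, hx]⟩

lemma isUnit_of_sw_surjective (p : n → Prop) [DecidablePred p] (G : Matrix n n ℝ)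
    (h : ∀ z, ∃ x, sw p x (G.mulVec x) = z) :
    IsUnit (G.submatrix (Subtype.val : {i // p i} → n) Subtype.val).det := by
  rw [← swMat_isUnit_iff, ← isUnit_iff_isUnit_det, ← mulVec_surjective_iff_isUnit]
  intro z
  obtain ⟨x, hx⟩ := h z
  exact ⟨x, by rw [swMat_mulVec, hx]⟩

end Aux

/-- Partial inversion composes via symmetric difference:
`inv_{a∪b} inv_{b∪c} F = inv_{a∪c} F` for pairwise disjoint `a`, `b`, `c`. -/
theorem partial_inversion_composition
    {n : Type*} [Fintype n] [DecidableEq n]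
    (F : Matrix n n ℝ)
    (hprin : ∀ (q : n → Prop) [DecidablePred q],
      IsUnit (F.submatrix (Subtype.val : {i // q i} → n) Subtype.val).det)
    (a b c : Finset n) (hab : Disjoint a b) (hac : Disjoint a c) (hbc : Disjoint b c) :
    pinv (· ∈ a ∪ b) (pinv (· ∈ b ∪ c) F) = pinv (· ∈ a ∪ c) F := by

  have hab' := Finset.disjoint_left.mp hab
  have hac' := Finset.disjoint_left.mp hac
  have hbc' := Finset.disjoint_left.mp hbc
  have hqdet := hprin (· ∈ b ∪ c)
  have hrdet := hprin (· ∈ a ∪ c)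
  set G : Matrix n n ℝ := pinv (· ∈ b ∪ c) F with hG
  -- key pointwise claims
  have claim1 : ∀ x : n → ℝ,
      sw (· ∈ a ∪ b) (sw (· ∈ b ∪ c) x (F.mulVec x))
        (G.mulVec (sw (· ∈ b ∪ c) x (F.mulVec x))) = sw (· ∈ a ∪ c) x (F.mulVec x) := by
    intro x
    rw [hG, pinv_mulVec (· ∈ b ∪ c) F hqdet x]
    funext i
    simp only [sw, Finset.mem_union]
    by_cases ha : i ∈ a <;> by_cases hb : i ∈ b <;> by_cases hc : i ∈ c
    · exact absurd hb (hab' ha)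
    · exact absurd hb (hab' ha)
    · exact absurd hc (hac' ha)
    · simp [ha, hb, hc]
    · exact absurd hc (hbc' hb)
    · simp [ha, hb, hc]
    · simp [ha, hb, hc]
    · simp [ha, hb, hc]
  have claim2 : ∀ x : n → ℝ,
      sw (· ∈ a ∪ b) (G.mulVec (sw (· ∈ b ∪ c) x (F.mulVec x)))
        (sw (· ∈ b ∪ c) x (F.mulVec x)) = sw (· ∈ a ∪ c) (F.mulVec x) x := by
    intro x
    rw [hG, pinv_mulVec (· ∈ b ∪ c) F hqdet x]
    funext i
    simp only [sw, Finset.mem_union]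
    by_cases ha : i ∈ a <;> by_cases hb : i ∈ b <;> by_cases hc : i ∈ c
    · exact absurd hb (hab' ha)
    · exact absurd hb (hab' ha)
    · exact absurd hc (hac' ha)
    · simp [ha, hb, hc]
    · exact absurd hc (hbc' hb)
    · simp [ha, hb, hc]
    · simp [ha, hb, hc]
    · simp [ha, hb, hc]
  -- the (a ∪ b)-principal submatrix of G is invertible
  have hsurj : ∀ z, ∃ x, sw (· ∈ a ∪ b) x (G.mulVec x) = z := by
    intro z
    obtain ⟨x, hx⟩ := sw_surjective (· ∈ a ∪ c) F hrdet z
    exact ⟨sw (· ∈ b ∪ c) x (F.mulVec x), by rw [claim1, hx]⟩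
  have hGdet := isUnit_of_sw_surjective (· ∈ a ∪ b) G hsurj
  -- the two matrices have the same action on vectors
  have hmv : ∀ z : n → ℝ,
      (pinv (· ∈ a ∪ b) G).mulVec z = (pinv (· ∈ a ∪ c) F).mulVec z := by
    intro z
    obtain ⟨x, hx⟩ := sw_surjective (· ∈ a ∪ c) F hrdet z
    rw [← hx, pinv_mulVec (· ∈ a ∪ c) F hrdet x, ← claim1 x,
      pinv_mulVec (· ∈ a ∪ b) G hGdet, claim2 x]
  ext i j
  have h1 := congrFun (hmv (Pi.single j 1)) i
  simpa [mulVec_single] using h1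
end

section
/- Partial inversion is exchangeable with selecting a submatrix: for a square matrix F with all principal submatrices invertible, disjoint sets a, b ⊆ V and J = a ∪ b, the (J,J)-submatrix of inv_a F equals inv_a applied to the submatrix F_{JJ}: [inv_a F]_{J,J} = inv_a (F_{JJ}). -/
open Matrix

/-!
Partial inversion on `a` is assembled from the blocks of `F` indexed by `a` and its complement,
and the only inverse it takes is that of `F_{aa}`. Restricting to an index set `J ⊇ a` reindexes the
`a`-block by a bijection, which commutes with inversion, and merely shrinks the complementary block,
which commutes with the block products and Schur complement.
-/

namespace Matrix

variable {α α' β β' γ γ' δ δ' R : Type*}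

theorem fromBlocks_submatrix_sumMap (A : Matrix α γ R) (B : Matrix α δ R) (C : Matrix β γ R)
    (D : Matrix β δ R) (e₁ : α' → α) (g₁ : β' → β) (e₂ : γ' → γ) (g₂ : δ' → δ) :
    (fromBlocks A B C D).submatrix (Sum.map e₁ g₁) (Sum.map e₂ g₂)
      = fromBlocks (A.submatrix e₁ e₂) (B.submatrix e₁ g₂) (C.submatrix g₁ e₂)
          (D.submatrix g₁ g₂) := by
  ext (i | i) (j | j) <;> rfl

variable (M : Matrix (α ⊕ β) (γ ⊕ δ) R) (e₁ : α' → α) (g₁ : β' → β) (e₂ : γ' → γ) (g₂ : δ' → δ)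

theorem toBlocks₁₁_submatrix_sumMap :
    (M.submatrix (Sum.map e₁ g₁) (Sum.map e₂ g₂)).toBlocks₁₁ = M.toBlocks₁₁.submatrix e₁ e₂ := rfl

theorem toBlocks₁₂_submatrix_sumMap :
    (M.submatrix (Sum.map e₁ g₁) (Sum.map e₂ g₂)).toBlocks₁₂ = M.toBlocks₁₂.submatrix e₁ g₂ := rfl

theorem toBlocks₂₁_submatrix_sumMap :
    (M.submatrix (Sum.map e₁ g₁) (Sum.map e₂ g₂)).toBlocks₂₁ = M.toBlocks₂₁.submatrix g₁ e₂ := rfl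

theorem toBlocks₂₂_submatrix_sumMap :
    (M.submatrix (Sum.map e₁ g₁) (Sum.map e₂ g₂)).toBlocks₂₂ = M.toBlocks₂₂.submatrix g₁ g₂ := rfl

end Matrix

theorem pinvBlocks_submatrix_sumMap {α α' β β' : Type*} [Fintype α] [Fintype β] [Fintype α']
    [Fintype β'] [DecidableEq α] [DecidableEq β] [DecidableEq α'] [DecidableEq β']
    (M : Matrix (α ⊕ β) (α ⊕ β) ℝ) (e : α' ≃ α) (g : β' → β) :
    pinvBlocks (M.submatrix (Sum.map e g) (Sum.map e g))
      = (pinvBlocks M).submatrix (Sum.map e g) (Sum.map e g) := by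
  simp only [pinvBlocks, toBlocks₁₁_submatrix_sumMap, toBlocks₁₂_submatrix_sumMap,
    toBlocks₂₁_submatrix_sumMap, toBlocks₂₂_submatrix_sumMap, inv_submatrix_equiv,
    submatrix_mul_equiv, fromBlocks_submatrix_sumMap]
  rfl

theorem pinv_submatrix {m n : Type*} [Fintype m] [DecidableEq m] [Fintype n] [DecidableEq n]
    (p : n → Prop) [DecidablePred p] (F : Matrix n n ℝ) {f : m → n} (hf : Function.Injective f)
    (hp : ∀ i, p i → i ∈ Set.range f) :
    (pinv p F).submatrix f f = pinv (fun j => p (f j)) (F.submatrix f f) := by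
  set σ := Equiv.sumCompl p
  set τ := Equiv.sumCompl fun j => p (f j)
  let e : {j // p (f j)} ≃ {i // p i} :=
    Equiv.ofBijective (fun j => ⟨f j, j.2⟩) ⟨fun j k h => Subtype.ext (hf (congrArg Subtype.val h)),
      fun i => by obtain ⟨j, hj⟩ := hp i i.2; exact ⟨⟨j, hj ▸ i.2⟩, Subtype.ext hj⟩⟩
  let g : {j // ¬ p (f j)} → {i // ¬ p i} := fun j => ⟨f j, j.2⟩
  have hcomm : f ∘ τ = σ ∘ Sum.map e g := by
    ext (j | j) <;> rfl
  have hcomm_symm : Sum.map e g ∘ τ.symm = σ.symm ∘ f := by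
    rw [Equiv.comp_symm_eq, Function.comp_assoc, hcomm, ← Function.comp_assoc,
      Equiv.symm_comp_self, Function.id_comp]
  calc (pinv p F).submatrix f f
      = (pinvBlocks (F.submatrix σ σ)).submatrix (σ.symm ∘ f) (σ.symm ∘ f) := rfl
    _ = ((pinvBlocks (F.submatrix σ σ)).submatrix (Sum.map e g) (Sum.map e g)).submatrix
          τ.symm τ.symm := by rw [submatrix_submatrix, hcomm_symm]
    _ = (pinvBlocks ((F.submatrix σ σ).submatrix (Sum.map e g) (Sum.map e g))).submatrix
          τ.symm τ.symm := by rw [pinvBlocks_submatrix_sumMap]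
    _ = pinv (fun j => p (f j)) (F.submatrix f f) := by
      rw [pinv, submatrix_submatrix, submatrix_submatrix, hcomm]

theorem partial_inversion_submatrix_general
    {n : Type*} [Fintype n] [DecidableEq n]
    (F : Matrix n n ℝ)
    (a b : Finset n) :
    (pinv (· ∈ a) F).submatrix (Subtype.val : {i // i ∈ a ∪ b} → n) Subtype.val
      = pinv (fun i : {i // i ∈ a ∪ b} => (i : n) ∈ a)
          (F.submatrix (Subtype.val : {i // i ∈ a ∪ b} → n) Subtype.val) :=
  pinv_submatrix _ F Subtype.val_injective fun i hi => ⟨⟨i, Finset.mem_union_left b hi⟩, rfl⟩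

/-- Partial inversion is exchangeable with selecting a submatrix:
`[inv_a F]_{J,J} = inv_a (F_{J,J})` for `J = a ∪ b`, `a` and `b` disjoint. -/
theorem partial_inversion_submatrix
    {n : Type*} [Fintype n] [DecidableEq n]
    (F : Matrix n n ℝ)
    (hprin : ∀ (q : n → Prop) [DecidablePred q],
      IsUnit (F.submatrix (Subtype.val : {i // q i} → n) Subtype.val).det)
    (a b : Finset n) (hab : Disjoint a b) :
    (pinv (· ∈ a) F).submatrix (Subtype.val : {i // i ∈ a ∪ b} → n) Subtype.val
      = pinv (fun i : {i // i ∈ a ∪ b} => (i : n) ∈ a)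
          (F.submatrix (Subtype.val : {i // i ∈ a ∪ b} → n) Subtype.val) :=
  partial_inversion_submatrix_general F a b
end

section
/- Let H be a real square matrix block-triangular in ordered blocks (a, b) with H_{ba} = 0 and H_{aa}, H_{bb} invertible, and let W be symmetric positive definite with W_{bb} invertible. Set K = inv_a H and Q = inv_b W. Then the partial inversion of Hᵀ W⁻¹ H on a equals the block matrix with (a,a)-block K_{aa} Q_{aa} K_{aa}ᵀ, (a,b)-block K_{ab} + K_{aa} Q_{ab} K_{bb}, and (b,b)-block H_{bb}ᵀ Q_{bb} H_{bb}. -/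
open Matrix

/-!
Eliminating the off-diagonal blocks of `W` against its Schur complement `Q_aa` factors
`W⁻¹ = Lᵀ · diag(Q_aa⁻¹, Q_bb) · L` with `L = [[1, -Q_ab], [0, 1]]`. Hence
`Hᵀ W⁻¹ H = Gᵀ · diag(Q_aa⁻¹, Q_bb) · G` for the block upper-triangular `G = L H`, whose blocks are
`H_aa`, `H_ab - Q_ab H_bb` and `H_bb`. Partial inversion on `a` of such a congruence is explicit:
the `G_ab` contributions cancel in the Schur complement, leaving `G_bbᵀ Q_bb G_bb`, and the
remaining blocks only involve `G_aa⁻¹`.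
-/

section BlockFactorization

variable {m n R : Type*} [Fintype m] [Fintype n] [DecidableEq m] [DecidableEq n] [CommRing R]

theorem inv_fromBlocks_one_zero_one (X : Matrix m n R) :
    (fromBlocks 1 X 0 1 : Matrix (m ⊕ n) (m ⊕ n) R)⁻¹ = fromBlocks 1 (-X) 0 1 :=
  inv_eq_left_inv <| by simp [fromBlocks_multiply]

theorem isUnit_schur_of_isUnit_fromBlocks {A : Matrix m m R} {B : Matrix m n R}
    {C : Matrix n m R} {D : Matrix n n R} [Invertible D] (h : IsUnit (fromBlocks A B C D)) :
    IsUnit (A - B * D⁻¹ * C) := by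
  rwa [← invOf_eq_nonsing_inv, ← isUnit_fromBlocks_iff_of_invertible₂₂]

theorem fromBlocks_eq_mul_mul_transpose_of_isSymm (A : Matrix m m R) (B : Matrix m n R)
    (D : Matrix n n R) [Invertible D] (hD : D.IsSymm) :
    fromBlocks A B Bᵀ D = fromBlocks 1 (B * D⁻¹) 0 1 *
      fromBlocks (A - B * D⁻¹ * Bᵀ) 0 0 D * (fromBlocks 1 (B * D⁻¹) 0 1)ᵀ := by
  rw [fromBlocks_eq_of_invertible₂₂ A, fromBlocks_transpose]
  simp [transpose_mul, transpose_nonsing_inv, hD.eq]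

theorem inv_fromBlocks_eq_transpose_mul_mul_of_isSymm (A : Matrix m m R) (B : Matrix m n R)
    (D : Matrix n n R) [Invertible D] (hD : D.IsSymm) (hW : IsUnit (fromBlocks A B Bᵀ D)) :
    (fromBlocks A B Bᵀ D)⁻¹ = (fromBlocks 1 (-(B * D⁻¹)) 0 1)ᵀ *
      fromBlocks (A - B * D⁻¹ * Bᵀ)⁻¹ 0 0 D⁻¹ * fromBlocks 1 (-(B * D⁻¹)) 0 1 := by
  have hS := isUnit_schur_of_isUnit_fromBlocks hW
  rw [fromBlocks_eq_mul_mul_transpose_of_isSymm A B D hD, Matrix.mul_inv_rev, Matrix.mul_inv_rev,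
    ← transpose_nonsing_inv, inv_fromBlocks_one_zero_one,
    inv_fromBlocks_zero₂₁_of_isUnit_iff _ _ _ (iff_of_true hS (isUnit_of_invertible D)),
    ← Matrix.mul_assoc]
  simp

omit [DecidableEq m] [DecidableEq n] in
theorem transpose_mul_fromBlocks_diag_mul_fromBlocks_zero₂₁ (A : Matrix m m R)
    (C : Matrix m n R) (D : Matrix n n R) (P : Matrix m m R) (Q : Matrix n n R) :
    (fromBlocks A C 0 D)ᵀ * fromBlocks P 0 0 Q * fromBlocks A C 0 D =
      fromBlocks (Aᵀ * P * A) (Aᵀ * P * C) (Cᵀ * P * A) (Cᵀ * P * C + Dᵀ * Q * D) := by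
  simp [fromBlocks_transpose, fromBlocks_multiply, Matrix.mul_assoc]

end BlockFactorization

section PartialInversion

variable {α β : Type*} [Fintype α] [Fintype β] [DecidableEq α] [DecidableEq β]

theorem pinvBlocks_fromBlocks (A : Matrix α α ℝ) (B : Matrix α β ℝ) (C : Matrix β α ℝ)
    (D : Matrix β β ℝ) :
    pinvBlocks (fromBlocks A B C D) = fromBlocks A⁻¹ (-(A⁻¹ * B)) (C * A⁻¹) (D - C * A⁻¹ * B) := by
  simp [pinvBlocks]

theorem pinvBlocks_transpose_mul_fromBlocks_diag_mul_fromBlocks_zero₂₁ (A : Matrix α α ℝ)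
    (C : Matrix α β ℝ) (D : Matrix β β ℝ) (P : Matrix α α ℝ) (Q : Matrix β β ℝ)
    [Invertible A] [Invertible P] :
    pinvBlocks ((fromBlocks A C 0 D)ᵀ * fromBlocks P⁻¹ 0 0 Q * fromBlocks A C 0 D) =
      fromBlocks (A⁻¹ * P * A⁻¹ᵀ) (-(A⁻¹ * C)) (Cᵀ * A⁻¹ᵀ) (Dᵀ * Q * D) := by
  have hinv : (Aᵀ * P⁻¹ * A)⁻¹ = A⁻¹ * P * Aᵀ⁻¹ := by
    rw [Matrix.mul_inv_rev, Matrix.mul_inv_rev, inv_inv_of_invertible, Matrix.mul_assoc]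
  rw [transpose_mul_fromBlocks_diag_mul_fromBlocks_zero₂₁, pinvBlocks_fromBlocks, hinv]
  congr 1 <;> simp [Matrix.mul_assoc, transpose_nonsing_inv A]

end PartialInversion

theorem partial_inversion_block_triangular_product_general
    {α β : Type*} [Fintype α] [Fintype β] [DecidableEq α] [DecidableEq β]
    (Haa : Matrix α α ℝ) (Hab : Matrix α β ℝ) (Hbb : Matrix β β ℝ)
    (Waa : Matrix α α ℝ) (Wab : Matrix α β ℝ) (Wbb : Matrix β β ℝ)
    [Invertible Haa]
    (hW : (Matrix.fromBlocks Waa Wab Wabᵀ Wbb).PosDef) :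
    letI H : Matrix (α ⊕ β) (α ⊕ β) ℝ := Matrix.fromBlocks Haa Hab 0 Hbb
    letI W : Matrix (α ⊕ β) (α ⊕ β) ℝ := Matrix.fromBlocks Waa Wab Wabᵀ Wbb
    letI Kaa := Haa⁻¹
    letI Kab := -(Haa⁻¹ * Hab)
    letI Kbb := Hbb
    letI Qaa := Waa - Wab * Wbb⁻¹ * Wabᵀ
    letI Qab := Wab * Wbb⁻¹
    letI Qbb := Wbb⁻¹
    (pinvBlocks (Hᵀ * W⁻¹ * H)).toBlocks₁₁ = Kaa * Qaa * Kaaᵀ ∧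
    (pinvBlocks (Hᵀ * W⁻¹ * H)).toBlocks₁₂ = Kab + Kaa * Qab * Kbb ∧
    (pinvBlocks (Hᵀ * W⁻¹ * H)).toBlocks₂₂ = Hbbᵀ * Qbb * Hbb := by
  have hWbb : Wbb.PosDef := hW.submatrix Sum.inr_injective
  have hWbb_symm : Wbb.IsSymm := isHermitian_iff_isSymm.mp hWbb.isHermitian
  have : Invertible Wbb := hWbb.isUnit.invertible
  have : Invertible (Waa - Wab * Wbb⁻¹ * Wabᵀ) :=
    (isUnit_schur_of_isUnit_fromBlocks hW.isUnit).invertible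
  have hG : fromBlocks 1 (-(Wab * Wbb⁻¹)) 0 1 * fromBlocks Haa Hab 0 Hbb =
      fromBlocks Haa (Hab - Wab * Wbb⁻¹ * Hbb) 0 Hbb := by
    simp [fromBlocks_multiply, sub_eq_add_neg]
  have hcongr : (fromBlocks Haa Hab 0 Hbb)ᵀ * (fromBlocks Waa Wab Wabᵀ Wbb)⁻¹ * fromBlocks Haa Hab 0 Hbb
      = (fromBlocks Haa (Hab - Wab * Wbb⁻¹ * Hbb) 0 Hbb)ᵀ *
        fromBlocks (Waa - Wab * Wbb⁻¹ * Wabᵀ)⁻¹ 0 0 Wbb⁻¹ *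
        fromBlocks Haa (Hab - Wab * Wbb⁻¹ * Hbb) 0 Hbb := by
    rw [← hG, inv_fromBlocks_eq_transpose_mul_mul_of_isSymm _ _ _ hWbb_symm hW.isUnit]
    simp only [transpose_mul, Matrix.mul_assoc]
  rw [hcongr, pinvBlocks_transpose_mul_fromBlocks_diag_mul_fromBlocks_zero₂₁]
  refine ⟨rfl, ?_, rfl⟩
  simp only [toBlocks_fromBlocks₁₂, Matrix.mul_sub, Matrix.mul_assoc]
  abel

/-- for `H` block-triangular in `(a,b)` and `W` symmetric positive definite,
with `K = inv_a H` and `Q = inv_b W`, partial inversion of `Hᵀ W⁻¹ H` on `a` has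
(a,a)-block `K_aa Q_aa K_aaᵀ`, (a,b)-block `K_ab + K_aa Q_ab K_bb` and
(b,b)-block `H_bbᵀ Q_bb H_bb`. -/
theorem partial_inversion_block_triangular_product
    {α β : Type*} [Fintype α] [Fintype β] [DecidableEq α] [DecidableEq β]
    (Haa : Matrix α α ℝ) (Hab : Matrix α β ℝ) (Hbb : Matrix β β ℝ)
    (Waa : Matrix α α ℝ) (Wab : Matrix α β ℝ) (Wbb : Matrix β β ℝ)
    [Invertible Haa] [Invertible Hbb]
    (hW : (Matrix.fromBlocks Waa Wab Wabᵀ Wbb).PosDef) :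
    letI H : Matrix (α ⊕ β) (α ⊕ β) ℝ := Matrix.fromBlocks Haa Hab 0 Hbb
    letI W : Matrix (α ⊕ β) (α ⊕ β) ℝ := Matrix.fromBlocks Waa Wab Wabᵀ Wbb
    letI Kaa := Haa⁻¹
    letI Kab := -(Haa⁻¹ * Hab)
    letI Kbb := Hbb
    letI Qaa := Waa - Wab * Wbb⁻¹ * Wabᵀ
    letI Qab := Wab * Wbb⁻¹
    letI Qbb := Wbb⁻¹
    (pinvBlocks (Hᵀ * W⁻¹ * H)).toBlocks₁₁ = Kaa * Qaa * Kaaᵀ ∧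
    (pinvBlocks (Hᵀ * W⁻¹ * H)).toBlocks₁₂ = Kab + Kaa * Qab * Kbb ∧
    (pinvBlocks (Hᵀ * W⁻¹ * H)).toBlocks₂₂ = Hbbᵀ * Qbb * Hbb :=
  partial_inversion_block_triangular_product_general Haa Hab Hbb Waa Wab Wbb hW
end

section
/- Anderson's recursion for covariance matrices: let A be unit upper-triangular partitioned in blocks (a, b, c) and Δ diagonal positive definite with conforming blocks, and let Σ = A⁻¹ Δ A⁻ᵀ be the covariance matrix of Y solving AY = ε with cov(ε) = Δ. With Π_{a|b.c} = −(A_{aa})⁻¹A_{ab}, the conditional covariance Σ_{aa|c} := Σ_{aa} − Σ_{ac}(Σ_{cc})⁻¹Σ_{ca} satisfies Σ_{aa|c} = (A_{aa})⁻¹Δ_{aa}(A_{aa})⁻ᵀ + Π_{a|b.c} ((A_{bb})⁻¹Δ_{bb}(A_{bb})⁻ᵀ) Π_{a|b.c}ᵀ. -/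
/-!
`A⁻¹` is again block upper triangular, with diagonal blocks `A_aa⁻¹, A_bb⁻¹, A_cc⁻¹`,
`(a,b)` block `Π_{a|b.c} A_bb⁻¹` and some `(a,c)` block `X`. Hence `Y = A⁻¹ε` gives
`Y_c = A_cc⁻¹ ε_c` and `Y_a = A_aa⁻¹ ε_a + Π_{a|b.c} A_bb⁻¹ ε_b + X ε_c`, so `Σ_aa` is a sum of three terms while
`Σ_ac = X Δ_cc A_cc⁻ᵀ` and `Σ_cc = A_cc⁻¹ Δ_cc A_cc⁻ᵀ`. The Schur correction
`Σ_ac Σ_cc⁻¹ Σ_ca` then collapses to `X Δ_cc Xᵀ`, removing exactly the `ε_c` term.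
-/

open Matrix

namespace Matrix

variable {k l m n R : Type*} [CommRing R]

theorem isUnit_of_isUpperTriangular [Fintype n] [DecidableEq n] [LinearOrder n]
    {M : Matrix n n R} (hM : M.IsUpperTriangular) (h1 : ∀ i, M i i = 1) : IsUnit M := by
  simp [isUnit_iff_isUnit_det, det_of_isUpperTriangular hM, h1]

theorem inv_fromBlocks_fromCols_zero_fromBlocks [Fintype l] [Fintype m] [Fintype n]
    [DecidableEq l] [DecidableEq m] [DecidableEq n] (P : Matrix l l R) (Q₁ : Matrix l m R)
    (Q₂ : Matrix l n R) (S : Matrix m m R) (T : Matrix m n R) (U : Matrix n n R)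
    (hP : IsUnit P) (hS : IsUnit S) (hU : IsUnit U) :
    (fromBlocks P (fromCols Q₁ Q₂) 0 (fromBlocks S T 0 U))⁻¹ =
      fromBlocks P⁻¹ (fromCols (-(P⁻¹ * Q₁) * S⁻¹) (P⁻¹ * (Q₁ * S⁻¹ * T - Q₂) * U⁻¹)) 0
        (fromBlocks S⁻¹ (-(S⁻¹ * T * U⁻¹)) 0 U⁻¹) := by
  have hSTU : IsUnit (fromBlocks S T 0 U) := isUnit_fromBlocks_zero₂₁.2 ⟨hS, hU⟩
  rw [inv_fromBlocks_zero₂₁_of_isUnit_iff _ _ _ (iff_of_true hP hSTU),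
    inv_fromBlocks_zero₂₁_of_isUnit_iff _ _ _ (iff_of_true hS hU),
    Matrix.mul_assoc, fromCols_mul_fromBlocks, mul_fromCols, fromCols_neg]
  simp only [Matrix.mul_zero, add_zero, Matrix.mul_add, Matrix.add_mul, Matrix.mul_neg,
    Matrix.neg_mul, Matrix.mul_assoc, neg_add, neg_neg, sub_eq_add_neg]

theorem submatrix_mul_mul_transpose [Fintype n] (B : Matrix m n R) (D : Matrix n n R)
    (f : k → m) (g : l → m) :
    (B * D * Bᵀ).submatrix f g = B.submatrix f id * D * (B.submatrix g id)ᵀ :=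
  rfl

theorem fromCols_mul_diagonal_mul_transpose_fromCols [Fintype m] [Fintype n]
    [DecidableEq m] [DecidableEq n] (X₁ : Matrix k m R) (X₂ : Matrix k n R)
    (Y₁ : Matrix l m R) (Y₂ : Matrix l n R) (d : m ⊕ n → R) :
    fromCols X₁ X₂ * diagonal d * (fromCols Y₁ Y₂)ᵀ =
      X₁ * diagonal (fun i => d (Sum.inl i)) * Y₁ᵀ
        + X₂ * diagonal (fun i => d (Sum.inr i)) * Y₂ᵀ := by
  conv_lhs => rw [← Sum.elim_comp_inl_inr d, ← fromBlocks_diagonal]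
  rw [fromCols_mul_fromBlocks, transpose_fromCols, fromCols_mul_fromRows]
  simp only [Matrix.mul_zero, add_zero, zero_add]
  rfl

theorem mul_mul_inv_mul_mul_cancel [Fintype n] [DecidableEq n] (X : Matrix k n R)
    (Y : Matrix n l R) {W E V : Matrix n n R}
    (hW : IsUnit W.det) (hE : IsUnit E.det) (hV : IsUnit V.det) :
    X * E * V * (W * E * V)⁻¹ * (W * E * Y) = X * E * Y := by
  rw [mul_inv_rev, mul_inv_rev]
  simp only [Matrix.mul_assoc, mul_nonsing_inv_cancel_left _ _ hV,
    mul_nonsing_inv_cancel_left _ _ hE, nonsing_inv_mul_cancel_left _ _ hW]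

theorem schur_of_eq_fromBlocks_fromCols_zero_fromBlocks [Fintype l] [Fintype m] [Fintype n]
    [DecidableEq l] [DecidableEq m] [DecidableEq n] {B : Matrix (l ⊕ (m ⊕ n)) (l ⊕ (m ⊕ n)) R}
    {P : Matrix l l R} {Q₁ : Matrix l m R} {Q₂ : Matrix l n R} {S : Matrix m m R}
    {T : Matrix m n R} {U : Matrix n n R}
    (hB : B = fromBlocks P (fromCols Q₁ Q₂) 0 (fromBlocks S T 0 U)) (d : l ⊕ (m ⊕ n) → R)
    (hU : IsUnit U.det)
    (hd : IsUnit (diagonal fun i => d (Sum.inr (Sum.inr i))).det) :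
    let c : n → l ⊕ (m ⊕ n) := fun i => Sum.inr (Sum.inr i)
    let Sig := B * diagonal d * Bᵀ
    Sig.submatrix Sum.inl Sum.inl
        - Sig.submatrix Sum.inl c * (Sig.submatrix c c)⁻¹ * Sig.submatrix c Sum.inl
      = P * diagonal (fun i => d (Sum.inl i)) * Pᵀ
        + Q₁ * diagonal (fun i => d (Sum.inr (Sum.inl i))) * Q₁ᵀ := by
  intro c Sig
  have rows_a : B.submatrix Sum.inl id = fromCols P (fromCols Q₁ Q₂) := by
    subst hB; ext i (j | j | j) <;> rfl
  have rows_c : B.submatrix c id = fromCols 0 (fromCols 0 U) := by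
    subst hB; ext i (j | j | j) <;> rfl
  have hUt : IsUnit Uᵀ.det := by rwa [det_transpose]
  simp only [Sig, submatrix_mul_mul_transpose, rows_a, rows_c,
    fromCols_mul_diagonal_mul_transpose_fromCols, Matrix.zero_mul, transpose_zero,
    Matrix.mul_zero, zero_add, mul_mul_inv_mul_mul_cancel _ _ hU hd hUt]
  abel

end Matrix

/-- Anderson's recursion for covariance matrices:
for `Σ = A⁻¹ Δ A⁻ᵀ` with `A` unit upper-triangular in order-respecting blocks `(a,b,c)`
and `Δ` diagonal positive definite,
`Σ_{aa|c} = A_aa⁻¹ Δ_aa A_aa⁻ᵀ + Pi_ab_{a|b.c} (A_bb⁻¹ Δ_bb A_bb⁻ᵀ) Pi_ab_{a|b.c}ᵀ`. -/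
theorem anderson_recursion
    {p q r : ℕ}
    (A : Matrix (Fin p ⊕ (Fin q ⊕ Fin r)) (Fin p ⊕ (Fin q ⊕ Fin r)) ℝ)
    (d : Fin p ⊕ (Fin q ⊕ Fin r) → ℝ) (hd : ∀ i, 0 < d i)
    -- injections into the three blocks
    (ia : Fin p → Fin p ⊕ (Fin q ⊕ Fin r)) (hia : ia = Sum.inl)
    (ib : Fin q → Fin p ⊕ (Fin q ⊕ Fin r)) (hib : ib = fun j => Sum.inr (Sum.inl j))
    (ic : Fin r → Fin p ⊕ (Fin q ⊕ Fin r)) (hic : ic = fun j => Sum.inr (Sum.inr j))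
    -- A is block upper-triangular in the ordered blocks (a, b, c)
    (hba : ∀ i j, A (ib i) (ia j) = 0)
    (hca : ∀ i j, A (ic i) (ia j) = 0)
    (hcb : ∀ i j, A (ic i) (ib j) = 0)
    -- the diagonal blocks are unit upper-triangular
    (haa1 : ∀ i, A (ia i) (ia i) = 1) (haa0 : ∀ i j : Fin p, j < i → A (ia i) (ia j) = 0)
    (hbb1 : ∀ i, A (ib i) (ib i) = 1) (hbb0 : ∀ i j : Fin q, j < i → A (ib i) (ib j) = 0)
    (hcc1 : ∀ i, A (ic i) (ic i) = 1) (hcc0 : ∀ i j : Fin r, j < i → A (ic i) (ic j) = 0) :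
    letI Sig := A⁻¹ * Matrix.diagonal d * (A⁻¹)ᵀ
    letI Saa := Sig.submatrix ia ia
    letI Sac := Sig.submatrix ia ic
    letI Sca := Sig.submatrix ic ia
    letI Scc := Sig.submatrix ic ic
    letI Aaa := A.submatrix ia ia
    letI Aab := A.submatrix ia ib
    letI Abb := A.submatrix ib ib
    letI Pi_ab := -(Aaa⁻¹ * Aab)
    Saa - Sac * Scc⁻¹ * Sca
      = Aaa⁻¹ * Matrix.diagonal (fun i => d (ia i)) * (Aaa⁻¹)ᵀ
        + Pi_ab * (Abb⁻¹ * Matrix.diagonal (fun i => d (ib i)) * (Abb⁻¹)ᵀ) * Pi_abᵀ := by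
  subst hia hib hic
  set Aaa := A.submatrix Sum.inl Sum.inl
  set Aab := A.submatrix Sum.inl fun j => Sum.inr (Sum.inl j)
  set Aac := A.submatrix Sum.inl fun j => Sum.inr (Sum.inr j)
  set Abb := A.submatrix (fun j => Sum.inr (Sum.inl j)) fun j => Sum.inr (Sum.inl j)
  set Abc := A.submatrix (fun j => Sum.inr (Sum.inl j)) fun j => Sum.inr (Sum.inr j)
  set Acc := A.submatrix (fun j => Sum.inr (Sum.inr j)) fun j => Sum.inr (Sum.inr j)
  have hA : A = fromBlocks Aaa (fromCols Aab Aac) 0 (fromBlocks Abb Abc 0 Acc) := by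
    ext (i | i | i) (j | j | j) <;> simp [Aaa, Aab, Aac, Abb, Abc, Acc, hba, hca, hcb]
  have hAcc : IsUnit Acc := isUnit_of_isUpperTriangular (fun i j h => hcc0 i j h) hcc1
  have hAinv := hA ▸ inv_fromBlocks_fromCols_zero_fromBlocks Aaa Aab Aac Abb Abc Acc
    (isUnit_of_isUpperTriangular (fun i j h => haa0 i j h) haa1)
    (isUnit_of_isUpperTriangular (fun i j h => hbb0 i j h) hbb1) hAcc
  have hdc : IsUnit (diagonal fun i => d (Sum.inr (Sum.inr i))).det := by
    simp [det_diagonal, Finset.prod_ne_zero_iff, (hd _).ne']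
  rw [schur_of_eq_fromBlocks_fromCols_zero_fromBlocks hAinv d
    (isUnit_nonsing_inv_det _ ((isUnit_iff_isUnit_det _).1 hAcc)) hdc]
  simp only [transpose_mul, Matrix.mul_assoc]
end

section
/- For a DAG with unit upper-triangular edge matrix 𝒜 and its ancestor closure 𝒜⁻ (where 𝒜⁻_{ik}=1 iff k=i, k is a parent, or k is a forefather of i), the induced concentration graph edge matrix 𝒮^{VV} = In[𝒜ᵀ𝒜] has, for an uncoupled pair i ≠ k (𝒜_{ik} = 𝒜_{ki} = 0), an entry 𝒮^{VV}_{ik} = 1 if and only if i and k have a common offspring in the DAG, i.e., there exists j with 𝒜_{ji} = 𝒜_{jk} = 1. -/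
open Matrix

/-- For a DAG with unit upper-triangular 0–1 edge matrix `𝒜`, the induced
concentration graph `𝒮^{VV} = In[𝒜ᵀ𝒜]` has, for an uncoupled pair `i ≠ k`, an edge iff
`i` and `k` have a common offspring `j`, i.e. `𝒜 j i = 𝒜 j k = 1`. -/
theorem induced_concentration_graph_common_offspring
    {n : ℕ} (A : Matrix (Fin n) (Fin n) ℝ)
    (hdiag : ∀ i, A i i = 1)
    (hlow : ∀ i k : Fin n, k < i → A i k = 0)
    (h01 : ∀ i k, A i k = 0 ∨ A i k = 1) :
    ∀ i k : Fin n, i ≠ k → A i k = 0 → A k i = 0 →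
      (((Aᵀ * A) i k ≠ 0) ↔ ∃ j, A j i = 1 ∧ A j k = 1) := by
  intro i k _ _ _
  rw [mul_apply]
  simp only [transpose_apply]
  constructor
  · intro h
    obtain ⟨j, _, hj⟩ := Finset.exists_ne_zero_of_sum_ne_zero h
    refine ⟨j, ?_, ?_⟩
    · rcases h01 j i with h' | h'
      · exact absurd (by rw [h', zero_mul]) hj
      · exact h'
    · rcases h01 j k with h' | h'
      · exact absurd (by rw [h', mul_zero]) hj
      · exact h'
  · rintro ⟨j, h1, h2⟩
    have hpos : (0:ℝ) < ∑ x, A x i * A x k := by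
      apply Finset.sum_pos' (fun x _ => ?_) ⟨j, Finset.mem_univ j, by rw [h1, h2]; norm_num⟩
      rcases h01 x i with h' | h' <;> rcases h01 x k with h'' | h'' <;>
        simp [h', h'']
    exact ne_of_gt hpos
end
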